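/- Let β > 0 and A an infinite block matrix with the stronger norm |A|_{β+} = sup_{s,s'} (1+||s|−|s'||)⟨s⟩^β⟨s'⟩^β ‖A_s^{s'}‖_∞ finite, and ζ with |ζ|_{β+} = sup_s |ζ_s|⟨s⟩^{β+1} finite. Then |Aζ|_{β+} ≤ C |A|_{β+} |ζ|_{β+}, where (Aζ)_s = ∑_k A_s^k ζ_k and C depends only on β. -/

import Mathlib

/-!
Each term obeys `‖A_s^k ζ_k‖ ⟨s⟩^{β+1} ≤ 2 |A|_{β+} |ζ|_{β+} ⟨s⟩ / ((1 + d) ⟨k⟩^{1+2β})` with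
`d = ||s| - |k||`. Since `⟨s⟩ ≤ ⟨k⟩ + d`, either `⟨s⟩ ≤ 2 (1 + d)` and this weight is at most
`2 ⟨k⟩^{-1-2β}`, or `⟨k⟩` exceeds both `⟨s⟩ / 2` and `⟨d⟩` and the weight is at most
`2 ⟨|s| - |k|⟩^{-1-2β}`. As `1 + 2β > 1`, both majorants are summable in `k` with sums bounded
independently of `s`, and the series converges absolutely in `ℂ²`.
-/

/-- Entrywise sup norm on `2×2` complex matrices. -/
noncomputable def mnorm (M : Matrix (Fin 2) (Fin 2) ℂ) : ℝ :=
  ⨆ i : Fin 2, ⨆ j : Fin 2, ‖M i j‖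

/-- Euclidean norm of a vector in `ℂ²`. -/
noncomputable def vnorm (v : Fin 2 → ℂ) : ℝ :=
  Real.sqrt (‖v 0‖ ^ 2 + ‖v 1‖ ^ 2)

lemma norm_entry_le_mnorm (M : Matrix (Fin 2) (Fin 2) ℂ) (i j : Fin 2) : ‖M i j‖ ≤ mnorm M :=
  (le_ciSup (Set.finite_range _).bddAbove j).trans
    (le_ciSup (f := fun i => ⨆ j, ‖M i j‖) (Set.finite_range _).bddAbove i)

lemma mnorm_nonneg (M : Matrix (Fin 2) (Fin 2) ℂ) : 0 ≤ mnorm M :=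
  (norm_nonneg _).trans (norm_entry_le_mnorm M 0 0)

lemma vnorm_eq_norm_toLp (v : Fin 2 → ℂ) : vnorm v = ‖WithLp.toLp 2 v‖ := by
  simp [vnorm, EuclideanSpace.norm_eq, Fin.sum_univ_two]

lemma vnorm_nonneg (v : Fin 2 → ℂ) : 0 ≤ vnorm v := Real.sqrt_nonneg _

lemma norm_add_norm_le_vnorm (v : Fin 2 → ℂ) : ‖v 0‖ + ‖v 1‖ ≤ √2 * vnorm v := by
  rw [vnorm, ← Real.sqrt_mul zero_le_two]
  apply Real.le_sqrt_of_sq_le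
  nlinarith [sq_nonneg (‖v 0‖ - ‖v 1‖)]

lemma vnorm_le_of_norm_le {v : Fin 2 → ℂ} {b : ℝ} (h : ∀ i, ‖v i‖ ≤ b) : vnorm v ≤ √2 * b := by
  have hb : 0 ≤ b := (norm_nonneg _).trans (h 0)
  rw [vnorm, ← Real.sqrt_sq hb, ← Real.sqrt_mul zero_le_two]
  gcongr
  nlinarith [h 0, h 1, norm_nonneg (v 0), norm_nonneg (v 1)]

lemma norm_mulVec_apply_le (M : Matrix (Fin 2) (Fin 2) ℂ) (v : Fin 2 → ℂ) (i : Fin 2) :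
    ‖(M.mulVec v) i‖ ≤ mnorm M * (‖v 0‖ + ‖v 1‖) := by
  rw [Matrix.mulVec, dotProduct, Fin.sum_univ_two, mul_add]
  refine (norm_add_le _ _).trans (add_le_add ?_ ?_) <;>
    rw [norm_mul] <;> gcongr <;> exact norm_entry_le_mnorm M i _

lemma vnorm_mulVec_le (M : Matrix (Fin 2) (Fin 2) ℂ) (v : Fin 2 → ℂ) :
    vnorm (M.mulVec v) ≤ 2 * mnorm M * vnorm v := by
  calc vnorm (M.mulVec v) ≤ √2 * (mnorm M * (√2 * vnorm v)) :=
        vnorm_le_of_norm_le fun i => (norm_mulVec_apply_le M v i).trans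
          (mul_le_mul_of_nonneg_left (norm_add_norm_le_vnorm v) (mnorm_nonneg M))
    _ = 2 * mnorm M * vnorm v := by
        linear_combination mnorm M * vnorm v * Real.mul_self_sqrt zero_le_two

lemma summable_and_vnorm_tsum_le {ι : Type*} {v : ι → Fin 2 → ℂ}
    (h : Summable fun k => vnorm (v k)) :
    Summable v ∧ vnorm (∑' k, v k) ≤ ∑' k, vnorm (v k) := by
  let e := PiLp.continuousLinearEquiv 2 ℂ (fun _ : Fin 2 => ℂ)
  simp only [vnorm_eq_norm_toLp] at h ⊢
  have hs : Summable fun k => WithLp.toLp 2 (v k) := Summable.of_norm h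
  refine ⟨(e.summable).2 hs, ?_⟩
  calc ‖WithLp.toLp 2 (∑' k, v k)‖ = ‖∑' k, WithLp.toLp 2 (v k)‖ := by
        congr 1; exact e.symm.map_tsum
    _ ≤ _ := norm_tsum_le_tsum_norm h

noncomputable def invBracketRpow (r : ℝ) (m : ℤ) : ℝ := (max |(m : ℝ)| 1 ^ r)⁻¹

lemma summable_invBracketRpow {r : ℝ} (hr : 1 < r) : Summable (invBracketRpow r) := by
  refine ((Real.summable_abs_int_rpow hr).update 0 1).congr fun n => ?_
  rcases eq_or_ne n 0 with rfl | hn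
  · simp [invBracketRpow]
  · have : (1 : ℝ) ≤ |(n : ℝ)| := by exact_mod_cast Int.one_le_abs hn
    simp [invBracketRpow, hn, max_eq_left this, Real.rpow_neg (abs_nonneg _)]

lemma invBracketRpow_nonneg (r : ℝ) (m : ℤ) : 0 ≤ invBracketRpow r m := by
  unfold invBracketRpow; positivity

section ReflectedShift

variable {f : ℤ → ℝ}

lemma comp_sub_abs_le (hf : ∀ k, 0 ≤ f k) (t k : ℤ) : f (t - |k|) ≤ f (t - k) + f (t + k) := by
  rcases abs_choice k with h | h <;> rw [h]
  · linarith [hf (t + k)]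
  · rw [sub_neg_eq_add]; linarith [hf (t - k)]

lemma summable_comp_sub (hf : Summable f) (t : ℤ) : Summable fun k => f (t - k) :=
  (Equiv.subLeft t).summable_iff.2 hf

lemma summable_comp_add (hf : Summable f) (t : ℤ) : Summable fun k => f (t + k) :=
  (Equiv.addLeft t).summable_iff.2 hf

lemma summable_comp_sub_abs (hf0 : ∀ k, 0 ≤ f k) (hf : Summable f) (t : ℤ) :
    Summable fun k => f (t - |k|) :=
  .of_nonneg_of_le (fun _ => hf0 _) (comp_sub_abs_le hf0 t)
    ((summable_comp_sub hf t).add (summable_comp_add hf t))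

lemma tsum_comp_sub_abs_le (hf0 : ∀ k, 0 ≤ f k) (hf : Summable f) (t : ℤ) :
    ∑' k, f (t - |k|) ≤ 2 * ∑' k, f k :=
  calc ∑' k, f (t - |k|) ≤ ∑' k, (f (t - k) + f (t + k)) :=
        (summable_comp_sub_abs hf0 hf t).tsum_le_tsum (comp_sub_abs_le hf0 t)
          ((summable_comp_sub hf t).add (summable_comp_add hf t))
    _ = 2 * ∑' k, f k := by
        have hsub : ∑' k, f (t - k) = ∑' k, f k := (Equiv.subLeft t).tsum_eq f
        have hadd : ∑' k, f (t + k) = ∑' k, f k := (Equiv.addLeft t).tsum_eq f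
        rw [(summable_comp_sub hf t).tsum_add (summable_comp_add hf t), hsub, hadd, two_mul]

end ReflectedShift

lemma div_mul_rpow_le_two_mul_inv_add_inv {r a c d : ℝ} (hr : 1 ≤ r) (ha : 1 ≤ a) (hc : 1 ≤ c)
    (hd : 0 ≤ d) (hacd : a ≤ c + d) :
    a / ((1 + d) * c ^ r) ≤ 2 * ((c ^ r)⁻¹ + (max d 1 ^ r)⁻¹) := by
  have hcr : 0 < c ^ r := by positivity
  have hdr : 0 < max d 1 ^ r := by positivity
  rcases le_or_gt a (2 * (1 + d)) with hsmall | hlarge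
  · calc a / ((1 + d) * c ^ r) ≤ 2 * (1 + d) / ((1 + d) * c ^ r) := by gcongr
      _ = 2 * (c ^ r)⁻¹ := by field_simp
      _ ≤ _ := by gcongr; exact le_add_of_nonneg_right (inv_nonneg.2 hdr.le)
  · have hdc : max d 1 ≤ c := max_le (by linarith) hc
    have hden : a / 2 * max d 1 ^ r ≤ (1 + d) * c ^ r := by
      have hM : 0 < max d 1 := by positivity
      calc a / 2 * max d 1 ^ r = max d 1 * (a / 2) * max d 1 ^ (r - 1) := by
            rw [mul_comm (max d 1), mul_assoc, ← Real.rpow_one_add' hM.le (by linarith)]; ring_nf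
        _ ≤ (1 + d) * c * c ^ (r - 1) := by
            gcongr
            · exact max_le (by linarith) (by linarith)
            · linarith
        _ = (1 + d) * c ^ r := by
            rw [mul_assoc, ← Real.rpow_one_add' (by linarith) (by linarith)]; ring_nf
    calc a / ((1 + d) * c ^ r) ≤ a / (a / 2 * max d 1 ^ r) := by gcongr
      _ = 2 * (max d 1 ^ r)⁻¹ := by field_simp
      _ ≤ _ := by gcongr; exact le_add_of_nonneg_left (inv_nonneg.2 hcr.le)

lemma max_abs_one_le_add_abs_sub (x y : ℝ) : max |x| 1 ≤ max |y| 1 + |(|x| - |y|)| :=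
  max_le (by linarith [le_abs_self (|x| - |y|), le_max_left |y| 1])
    (by linarith [le_max_right |y| 1, abs_nonneg (|x| - |y|)])

lemma mul_mul_rpow_le_of_weighted_bounds {β a c d m z nA nζ : ℝ} (hβ : 0 ≤ β) (ha : 1 ≤ a)
    (hc : 1 ≤ c) (hd : 0 ≤ d) (hacd : a ≤ c + d) (hm : 0 ≤ m) (hz : 0 ≤ z)
    (hA : (1 + d) * a ^ β * c ^ β * m ≤ nA) (hζ : z * c ^ (β + 1) ≤ nζ) :
    m * z * a ^ (β + 1) ≤
      2 * (nA * nζ) * ((c ^ (1 + 2 * β))⁻¹ + (max d 1 ^ (1 + 2 * β))⁻¹) := by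
  have ha0 : 0 < a := by linarith
  have hc0 : 0 < c := by linarith
  have hnA : 0 ≤ nA := le_trans (by positivity) hA
  have hnζ : 0 ≤ nζ := le_trans (by positivity) hζ
  have hprod : m * z * ((1 + d) * a ^ β * c ^ (1 + 2 * β)) ≤ nA * nζ :=
    calc m * z * ((1 + d) * a ^ β * c ^ (1 + 2 * β))
        = ((1 + d) * a ^ β * c ^ β * m) * (z * c ^ (β + 1)) := by
          rw [show 1 + 2 * β = β + (β + 1) by ring, Real.rpow_add hc0]; ring
      _ ≤ nA * nζ := mul_le_mul hA hζ (by positivity) hnA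
  calc m * z * a ^ (β + 1)
      = m * z * ((1 + d) * a ^ β * c ^ (1 + 2 * β)) * (a / ((1 + d) * c ^ (1 + 2 * β))) := by
        rw [Real.rpow_add_one ha0.ne']; field_simp
    _ ≤ nA * nζ * (2 * ((c ^ (1 + 2 * β))⁻¹ + (max d 1 ^ (1 + 2 * β))⁻¹)) :=
        mul_le_mul hprod (div_mul_rpow_le_two_mul_inv_add_inv (by linarith) ha hc hd hacd)
          (by positivity) (mul_nonneg hnA hnζ)
    _ = _ := by ring

lemma summable_mulVec_and_vnorm_tsum_le {β nA nζ : ℝ} (hβ : 0 < β)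
    {A : ℤ → Matrix (Fin 2) (Fin 2) ℂ} {ζ : ℤ → Fin 2 → ℂ} (s : ℤ)
    (hA : ∀ k : ℤ, (1 + |(|(s : ℝ)| - |(k : ℝ)|)|) * (max |(s : ℝ)| 1) ^ β *
      (max |(k : ℝ)| 1) ^ β * mnorm (A k) ≤ nA)
    (hζ : ∀ k : ℤ, vnorm (ζ k) * (max |(k : ℝ)| 1) ^ (β + 1) ≤ nζ) :
    Summable (fun k => (A k).mulVec (ζ k)) ∧
      vnorm (∑' k, (A k).mulVec (ζ k)) * (max |(s : ℝ)| 1) ^ (β + 1) ≤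
        12 * (∑' m, invBracketRpow (1 + 2 * β) m) * nA * nζ := by
  set F := invBracketRpow (1 + 2 * β)
  set w := (max |(s : ℝ)| 1) ^ (β + 1)
  have hw : 0 < w := by positivity
  have hF0 : ∀ m, 0 ≤ F m := invBracketRpow_nonneg _
  have hF : Summable F := summable_invBracketRpow (by linarith)
  have hnA : 0 ≤ nA := le_trans (mul_nonneg (by positivity) (mnorm_nonneg _)) (hA 0)
  have hnζ : 0 ≤ nζ := le_trans (mul_nonneg (vnorm_nonneg _) (by positivity)) (hζ 0)
  have hterm (k : ℤ) :
      vnorm ((A k).mulVec (ζ k)) * w ≤ 4 * (nA * nζ) * (F k + F (|s| - |k|)) := by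
    have hFsk : F (|s| - |k|) = (max |(|(s : ℝ)| - |(k : ℝ)|)| 1 ^ (1 + 2 * β))⁻¹ := by
      simp [F, invBracketRpow]
    calc vnorm ((A k).mulVec (ζ k)) * w ≤ 2 * (mnorm (A k) * vnorm (ζ k) * w) := by
          nlinarith [vnorm_mulVec_le (A k) (ζ k)]
      _ ≤ 2 * (2 * (nA * nζ) * (F k + F (|s| - |k|))) := by
          rw [hFsk]
          exact mul_le_mul_of_nonneg_left (mul_mul_rpow_le_of_weighted_bounds hβ.le
            (le_max_right _ _) (le_max_right _ _) (abs_nonneg _) (max_abs_one_le_add_abs_sub _ _)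
            (mnorm_nonneg _) (vnorm_nonneg _) (hA k) (hζ k)) zero_le_two
      _ = 4 * (nA * nζ) * (F k + F (|s| - |k|)) := by ring
  have hmaj : Summable fun k => F k + F (|s| - |k|) := hF.add (summable_comp_sub_abs hF0 hF |s|)
  have hwsum : Summable fun k => vnorm ((A k).mulVec (ζ k)) * w :=
    .of_nonneg_of_le (fun k => mul_nonneg (vnorm_nonneg _) hw.le) hterm (hmaj.mul_left _)
  obtain ⟨hsum, hle⟩ := summable_and_vnorm_tsum_le ((summable_mul_right_iff hw.ne').1 hwsum)
  refine ⟨hsum, ?_⟩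
  calc vnorm (∑' k, (A k).mulVec (ζ k)) * w ≤ (∑' k, vnorm ((A k).mulVec (ζ k))) * w :=
        mul_le_mul_of_nonneg_right hle hw.le
    _ = ∑' k, vnorm ((A k).mulVec (ζ k)) * w := tsum_mul_right.symm
    _ ≤ ∑' k, 4 * (nA * nζ) * (F k + F (|s| - |k|)) :=
        hwsum.tsum_le_tsum hterm (hmaj.mul_left _)
    _ = 4 * (nA * nζ) * (∑' k, F k + ∑' k, F (|s| - |k|)) := by
        rw [tsum_mul_left, hF.tsum_add (summable_comp_sub_abs hF0 hF |s|)]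
    _ ≤ 4 * (nA * nζ) * (∑' k, F k + 2 * ∑' k, F k) := by
        gcongr; exact tsum_comp_sub_abs_le hF0 hF |s|
    _ = 12 * (∑' m, F m) * nA * nζ := by ring

/-- Lemma 3.1(4): if `|A|_{β+} ≤ nA` and `|ζ|_{β+} ≤ nζ`, then `Aζ` converges and
`|Aζ|_{β+} ≤ C nA nζ`, with `C` depending only on `β`. -/
theorem stmt_9 (β : ℝ) (hβ : 0 < β) :
    ∃ C > 0, ∀ (A : ℤ → ℤ → Matrix (Fin 2) (Fin 2) ℂ) (ζ : ℤ → Fin 2 → ℂ) (nA nζ : ℝ),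
      (∀ s s' : ℤ,
        (1 + |(|(s : ℝ)| - |(s' : ℝ)|)|) * (max |(s : ℝ)| 1) ^ β * (max |(s' : ℝ)| 1) ^ β *
            mnorm (A s s') ≤ nA) →
      (∀ s : ℤ, vnorm (ζ s) * (max |(s : ℝ)| 1) ^ (β + 1) ≤ nζ) →
      ∀ s : ℤ,
        Summable (fun k : ℤ => (A s k).mulVec (ζ k)) ∧
        vnorm (∑' k : ℤ, (A s k).mulVec (ζ k)) * (max |(s : ℝ)| 1) ^ (β + 1) ≤ C * nA * nζ := by
  have hF := summable_invBracketRpow (show 1 < 1 + 2 * β by linarith)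
  have hK : 0 < ∑' m, invBracketRpow (1 + 2 * β) m :=
    hF.tsum_pos (invBracketRpow_nonneg _) 0 (by simp [invBracketRpow])
  exact ⟨_, by positivity, fun A ζ nA nζ hA hζ s =>
    summable_mulVec_and_vnorm_tsum_le hβ s (hA s) hζ⟩
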